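/- arXiv:1811.00850 — 6 statements merged into one kernel-verified Lean document; each statement's English description precedes it below -/
import Mathlib

section
/- Let $F = G S^*$ where $G, S \in \mathbb{C}^{n \times p}$ satisfy $S^* G = 0$. Then $F^2 = 0$, and the matrix $\cR = F + F^*$ satisfies $\|\cR\|_2 = \|F\|_2 = \|G S^*\|_2$. -/
open Matrix

/-- Spectral (operator 2-) norm of a complex rectangular matrix. -/
noncomputable def specNorm {a b : ℕ} (A : Matrix (Fin a) (Fin b) ℂ) : ℝ :=
  ‖LinearMap.toContinuousLinearMap (Matrix.toEuclideanLin A)‖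

/- `a + a⋆` squares to the sum of the mutually annihilating positive elements `a a⋆` and `a⋆ a`,
whose norm is therefore `max ‖a a⋆‖ ‖a⋆ a‖ = ‖a‖²`. -/
theorem norm_add_star_of_mul_self_eq_zero {A : Type*} [NonUnitalCStarAlgebra A] {a : A}
    (ha : a * a = 0) : ‖a + star a‖ = ‖a‖ := by
  have hself : IsSelfAdjoint (a + star a) := by
    simp only [IsSelfAdjoint, star_add, star_star, add_comm]
  have hstar_sq : star a * star a = 0 := by rw [← star_mul, ha, star_zero]
  have hsq : (a + star a) * (a + star a) = a * star a + star a * a := by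
    rw [mul_add, add_mul, add_mul, ha, hstar_sq]
    abel
  have horth : a * star a * (star a * a) = 0 := by
    rw [mul_assoc, ← mul_assoc (star a), hstar_sq, zero_mul, mul_zero]
  refine (mul_self_inj (norm_nonneg _) (norm_nonneg _)).mp ?_
  calc ‖a + star a‖ * ‖a + star a‖ = ‖star (a + star a) * (a + star a)‖ :=
        CStarRing.norm_star_mul_self.symm
    _ = ‖a * star a + star a * a‖ := by rw [hself.star_eq, hsq]
    _ = max ‖a * star a‖ ‖star a * a‖ :=
        (IsSelfAdjoint.mul_star_self a).norm_add_eq_max (IsSelfAdjoint.star_mul_self a) horth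
    _ = ‖a‖ * ‖a‖ := by rw [CStarRing.norm_self_mul_star, CStarRing.norm_star_mul_self, max_self]

/-- If `F = G Sᴴ` with `Sᴴ G = 0`, then `F² = 0` and the Hermitian matrix
`F + Fᴴ` has the same spectral norm as `F`. -/
theorem stmt2 {n p : ℕ} (G S : Matrix (Fin n) (Fin p) ℂ)
    (h : Sᴴ * G = 0) :
    (G * Sᴴ) * (G * Sᴴ) = 0 ∧
    specNorm (G * Sᴴ + (G * Sᴴ)ᴴ) = specNorm (G * Sᴴ) := by
  have hF_sq : (G * Sᴴ) * (G * Sᴴ) = 0 := by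
    rw [Matrix.mul_assoc, ← Matrix.mul_assoc Sᴴ, h, Matrix.zero_mul, Matrix.mul_zero]
  refine ⟨hF_sq, ?_⟩
  let e := toEuclideanCLM (n := Fin n) (𝕜 := ℂ)
  -- `specNorm` of a square matrix is by definition the norm of its image in the C⋆-algebra `e`.
  change ‖e (G * Sᴴ + (G * Sᴴ)ᴴ)‖ = ‖e (G * Sᴴ)‖
  rw [map_add, ← star_eq_conjTranspose, map_star]
  exact norm_add_star_of_mul_self_eq_zero (by rw [← map_mul, hF_sq, map_zero])
end

section
/- In the RADI step with shift $\alpha \in \mathbb{C}$ with $\mathrm{Re}(\alpha) < 0$ applied to the CARE with matrices $A_j = A - BK_j^*$ and residual factor $R_j$ (so that $\cR(X_j) = R_j R_j^*$), define $V_{j+1} = (A_j + \alpha I)^{-*} R_j$, $\tilde Y_{j+1} = I + (V_{j+1}^* B)(V_{j+1}^* B)^*$, $\Xi_{j+1} = -2\mathrm{Re}(\alpha) V_{j+1} \tilde Y_{j+1}^{-1} V_{j+1}^*$, and $X_{j+1} = X_j + \Xi_{j+1}$. Then the new residual satisfies $\cR(X_{j+1}) = R_{j+1} R_{j+1}^*$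 with $R_{j+1} = R_j - 2\mathrm{Re}(\alpha) V_{j+1} \tilde Y_{j+1}^{-1}$, and the new feedback is $K_{j+1} = X_{j+1} B = K_j - 2\mathrm{Re}(\alpha)(V_{j+1} \tilde Y_{j+1}^{-1})(V_{j+1}^* B)$. -/
open Matrix

/-- One RADI step: residual factor and feedback update formulas. -/
theorem stmt5 {n m p : ℕ}
    (A X : Matrix (Fin n) (Fin n) ℂ) (B : Matrix (Fin n) (Fin m) ℂ)
    (C : Matrix (Fin p) (Fin n) ℂ) (R V : Matrix (Fin n) (Fin p) ℂ)
    (α : ℂ) (hα : α.re < 0) (hX : Xᴴ = X)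
    (hres : Aᴴ * X + X * A - X * B * Bᴴ * X + Cᴴ * C = R * Rᴴ)
    (hV : (A - B * (X * B)ᴴ + α • (1 : Matrix (Fin n) (Fin n) ℂ))ᴴ * V = R)
    (hYu : IsUnit ((1 : Matrix (Fin p) (Fin p) ℂ) + (Vᴴ * B) * (Vᴴ * B)ᴴ)) :
    let Yt := (1 : Matrix (Fin p) (Fin p) ℂ) + (Vᴴ * B) * (Vᴴ * B)ᴴ
    let X' := X + (-(2 * (α.re : ℂ))) • (V * Yt⁻¹ * Vᴴ)
    let R' := R + (-(2 * (α.re : ℂ))) • (V * Yt⁻¹)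
    (Aᴴ * X' + X' * A - X' * B * Bᴴ * X' + Cᴴ * C = R' * R'ᴴ)
    ∧ X' * B = X * B + (-(2 * (α.re : ℂ))) • ((V * Yt⁻¹) * (Vᴴ * B)) := by
  intro Yt X' R'
  have hYtdef : Yt = (1 : Matrix (Fin p) (Fin p) ℂ) + (Vᴴ * B) * (Vᴴ * B)ᴴ := rfl
  have hX' : X' = X + (-(2 * (α.re : ℂ))) • (V * Yt⁻¹ * Vᴴ) := rfl
  have hR' : R' = R + (-(2 * (α.re : ℂ))) • (V * Yt⁻¹) := rfl
  have hYh : Ytᴴ = Yt := by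
    rw [hYtdef]
    simp [Matrix.conjTranspose_add, Matrix.conjTranspose_mul]
  have hYd : IsUnit Yt.det := (Matrix.isUnit_iff_isUnit_det _).mp (hYtdef ▸ hYu)
  have hYi' : Yt⁻¹ * Yt = 1 := Matrix.nonsing_inv_mul _ hYd
  have hIh : (Yt⁻¹)ᴴ = Yt⁻¹ := by
    rw [Matrix.conjTranspose_nonsing_inv, hYh]
  have hsub : Yt - 1 = (Vᴴ * B) * (Bᴴ * V) := by
    rw [hYtdef]
    simp [Matrix.conjTranspose_mul]
  have k0 : Yt⁻¹ * ((Vᴴ * B) * (Bᴴ * V)) = 1 - Yt⁻¹ := by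
    rw [← hsub, mul_sub, hYi', mul_one]
  have key : ∀ M : Matrix (Fin p) (Fin n) ℂ,
      Yt⁻¹ * (Vᴴ * (B * (Bᴴ * (V * M)))) = M - Yt⁻¹ * M := by
    intro M
    have h1 : Yt⁻¹ * ((Vᴴ * B) * (Bᴴ * V)) * M = (1 - Yt⁻¹) * M := by rw [k0]
    simpa only [Matrix.mul_assoc, Matrix.sub_mul, Matrix.one_mul] using h1
  have hAV0 : Aᴴ * V = R + X * (B * (Bᴴ * V)) - (starRingEnd ℂ) α • V := by
    rw [← hV]
    simp only [conjTranspose_add, conjTranspose_sub, conjTranspose_mul,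
      conjTranspose_smul, conjTranspose_one, conjTranspose_conjTranspose, hX,
      Matrix.sub_mul, Matrix.add_mul, Matrix.smul_mul, Matrix.one_mul,
      Matrix.mul_assoc, Complex.star_def]
    module
  have hVA0 : Vᴴ * A = Rᴴ + Vᴴ * (B * (Bᴴ * X)) - α • Vᴴ := by
    have h := congrArg conjTranspose hAV0
    simp only [conjTranspose_add, conjTranspose_sub, conjTranspose_mul,
      conjTranspose_smul, conjTranspose_conjTranspose, hX, Complex.star_def,
      Complex.conj_conj, Matrix.mul_assoc] at h
    exact h
  have hAV' : Aᴴ * (V * (Yt⁻¹ * Vᴴ)) = R * (Yt⁻¹ * Vᴴ)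
      + X * (B * (Bᴴ * (V * (Yt⁻¹ * Vᴴ)))) - (starRingEnd ℂ) α • (V * (Yt⁻¹ * Vᴴ)) := by
    rw [← Matrix.mul_assoc, hAV0]
    simp only [Matrix.sub_mul, Matrix.add_mul, Matrix.smul_mul, Matrix.mul_assoc]
  have hconj : (starRingEnd ℂ) α = 2 * (α.re : ℂ) - α := by
    rw [Complex.ext_iff]
    constructor <;> simp <;> ring
  constructor
  · rw [hX', hR']
    simp only [Matrix.mul_add, Matrix.add_mul, Matrix.mul_sub, Matrix.sub_mul,
      Matrix.smul_mul, Matrix.mul_smul, smul_smul, smul_add, smul_sub,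
      conjTranspose_add, conjTranspose_mul, conjTranspose_smul,
      conjTranspose_conjTranspose, hIh, hX, map_neg, _root_.map_mul,
      Complex.conj_ofReal, map_ofNat, Matrix.one_mul, Matrix.mul_one,
      Matrix.mul_assoc, Complex.star_def]
    rw [hVA0, hAV', key, ← hres, hconj]
    simp only [Matrix.mul_add, Matrix.add_mul, Matrix.mul_sub, Matrix.sub_mul,
      Matrix.smul_mul, Matrix.mul_smul, smul_smul, smul_add, smul_sub,
      Matrix.one_mul, Matrix.mul_one, Matrix.mul_assoc]
    module
  · rw [hX']
    simp only [Matrix.add_mul, Matrix.smul_mul, Matrix.mul_assoc]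
end

section
/- Let $A^* Q_u = Q_u R_u$ be a partial real Schur decomposition with $Q_u^* Q_u = I_u$, and let $S_u = S_u^*$ solve the Bernoulli equation $R_u S_u + S_u R_u^* - S_u (Q_u^* B)(B^* Q_u) S_u = 0$. Then $X_0 := Q_u S_u Q_u^*$ satisfies $\cR(X_0) = A^* X_0 + X_0 A - X_0 B B^* X_0 + C^*C = C^*C$, i.e., the Riccati residual of the initial guess $X_0$ equals $C^*C$. -/
open Matrix

/-- For the Bernoulli-based initial guess `X₀ = Q S Qᵀ` built from a partial real
Schur decomposition `AᵀQ = Q R`, the Riccati residual of `X₀` equals `CᵀC`. -/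
theorem stmt9 {n u m p : ℕ}
    (A : Matrix (Fin n) (Fin n) ℝ) (B : Matrix (Fin n) (Fin m) ℝ)
    (C : Matrix (Fin p) (Fin n) ℝ)
    (Qu : Matrix (Fin n) (Fin u) ℝ) (Ru S : Matrix (Fin u) (Fin u) ℝ)
    (hQ : Quᵀ * Qu = 1) (hSchur : Aᵀ * Qu = Qu * Ru) (hS : Sᵀ = S)
    (hBern : Ru * S + S * Ruᵀ - S * ((Quᵀ * B) * (Bᵀ * Qu)) * S = 0) :
    Aᵀ * (Qu * S * Quᵀ) + (Qu * S * Quᵀ) * A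
      - (Qu * S * Quᵀ) * B * Bᵀ * (Qu * S * Quᵀ) + Cᵀ * C = Cᵀ * C := by
  have hQA : Quᵀ * A = Ruᵀ * Quᵀ := by
    have := congrArg Matrix.transpose hSchur
    simpa [Matrix.transpose_mul] using this
  have h1 : Aᵀ * (Qu * S * Quᵀ) = Qu * (Ru * S) * Quᵀ := by
    calc Aᵀ * (Qu * S * Quᵀ) = (Aᵀ * Qu) * S * Quᵀ := by
          simp [Matrix.mul_assoc]
      _ = Qu * (Ru * S) * Quᵀ := by rw [hSchur]; simp [Matrix.mul_assoc]
  have h2 : (Qu * S * Quᵀ) * A = Qu * (S * Ruᵀ) * Quᵀ := by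
    calc (Qu * S * Quᵀ) * A = Qu * S * (Quᵀ * A) := by
          simp [Matrix.mul_assoc]
      _ = Qu * (S * Ruᵀ) * Quᵀ := by rw [hQA]; simp [Matrix.mul_assoc]
  have h3 : (Qu * S * Quᵀ) * B * Bᵀ * (Qu * S * Quᵀ)
      = Qu * (S * ((Quᵀ * B) * (Bᵀ * Qu)) * S) * Quᵀ := by
    simp [Matrix.mul_assoc]
  have key : Aᵀ * (Qu * S * Quᵀ) + (Qu * S * Quᵀ) * A
      - (Qu * S * Quᵀ) * B * Bᵀ * (Qu * S * Quᵀ)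
      = Qu * (Ru * S + S * Ruᵀ - S * ((Quᵀ * B) * (Bᵀ * Qu)) * S) * Quᵀ := by
    rw [h1, h2, h3]
    simp [Matrix.mul_add, Matrix.mul_sub, Matrix.add_mul, Matrix.sub_mul]
  rw [key, hBern]
  simp
end

section
/- (ADI residual update) Let $W^{(j-1)} \in \mathbb{R}^{n \times q}$ and suppose $Z^{(j-1)}$ satisfies $A^* Z^{(j-1)} (Z^{(j-1)})^* M + M^* Z^{(j-1)} (Z^{(j-1)})^* A + F F^* = W^{(j-1)} (W^{(j-1)})^*$ for a Lyapunov residual factor $W^{(j-1)}$. Define $V^{(j)} = (A + \alpha^{(j)} M)^{-*} W^{(j-1)}$ with $\mathrm{Re}(\alpha^{(j)}) < 0$, $W^{(j)} = W^{(j-1)} - 2\mathrm{Re}(\alpha^{(j)}) M^* V^{(j)}$, and $Z^{(j)} = [Z^{(j-1)}, \sqrt{-2\mathrm{Re}(\alpha^{(j)})} V^{(j)}]$. Then $A^* Z^{(j)} (Z^{(j)})^* M + M^* Z^{(j)} (Z^{(j)})^* A + F F^* = W^{(j)} (W^{(j)})^*$. -/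
/-!
Appending the block `√(-2α) V` to `Z` adds `-2α V Vᵀ` to the Gram matrix `Z Zᵀ`, so by linearity
it adds `-2α (Aᵀ V Vᵀ M + Mᵀ V Vᵀ A)` to the residual. Since `W = Aᵀ V + α Mᵀ V`, the new factor
is `W' = Aᵀ V - α Mᵀ V`, and flipping the sign of the cross terms of `W Wᵀ` changes it by exactly
the same amount.
-/

open Matrix

variable {R : Type*} [CommRing R] {m n k : Type*} [Fintype n] [Fintype k]

theorem fromCols_mul_transpose_fromCols (Z : Matrix m n R) (V : Matrix m k R) :
    fromCols Z V * (fromCols Z V)ᵀ = Z * Zᵀ + V * Vᵀ := by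
  rw [transpose_fromCols, fromCols_mul_fromRows]

theorem smul_mul_transpose_smul (c : R) (V : Matrix m n R) :
    (c • V) * (c • V)ᵀ = (c * c) • (V * Vᵀ) := by
  rw [transpose_smul, Matrix.smul_mul, Matrix.mul_smul, smul_smul]

theorem shifted_factor_mul_transpose [Fintype m] (A M : Matrix m m R)
    (V W : Matrix m n R) (α : R) (hW : (A + α • M)ᵀ * V = W) :
    (W - (2 * α) • (Mᵀ * V)) * (W - (2 * α) • (Mᵀ * V))ᵀ
      = W * Wᵀ - (2 * α) • (Aᵀ * (V * Vᵀ) * M + Mᵀ * (V * Vᵀ) * A) := by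
  subst hW
  simp only [transpose_add, transpose_sub, transpose_smul, transpose_mul, transpose_transpose, Matrix.add_mul,
    Matrix.mul_add, Matrix.sub_mul, Matrix.mul_sub, Matrix.smul_mul, Matrix.mul_smul,
    Matrix.mul_assoc]
  module

theorem stmt13_general {n q r : ℕ}
    (A M : Matrix (Fin n) (Fin n) ℝ) (F : Matrix (Fin n) (Fin q) ℝ)
    (Z : Matrix (Fin n) (Fin r) ℝ) (W V : Matrix (Fin n) (Fin q) ℝ)
    (α : ℝ) (hα : α < 0)
    (hres : Aᵀ * (Z * Zᵀ) * M + Mᵀ * (Z * Zᵀ) * A + F * Fᵀ = W * Wᵀ)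
    (hV : (A + α • M)ᵀ * V = W) :
    let W' := W - (2 * α) • (Mᵀ * V)
    let Z' := fromCols Z (Real.sqrt (-(2 * α)) • V)
    Aᵀ * (Z' * Z'ᵀ) * M + Mᵀ * (Z' * Z'ᵀ) * A + F * Fᵀ = W' * W'ᵀ := by
  intro W' Z'
  have hZ : Z' * Z'ᵀ = Z * Zᵀ + (-(2 * α)) • (V * Vᵀ) := by
    rw [fromCols_mul_transpose_fromCols, smul_mul_transpose_smul,
      Real.mul_self_sqrt (by linarith)]
  rw [hZ, shifted_factor_mul_transpose A M V W α hV, ← hres]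
  simp only [Matrix.mul_add, Matrix.add_mul, Matrix.mul_smul, Matrix.smul_mul]
  module

/-- LR-ADI residual invariant: one ADI step (real shift `α < 0`) preserves the
low-rank factorization of the Lyapunov residual. -/
theorem stmt13 {n q r : ℕ}
    (A M : Matrix (Fin n) (Fin n) ℝ) (F : Matrix (Fin n) (Fin q) ℝ)
    (Z : Matrix (Fin n) (Fin r) ℝ) (W V : Matrix (Fin n) (Fin q) ℝ)
    (α : ℝ) (hα : α < 0) (hinv : IsUnit (A + α • M))
    (hres : Aᵀ * (Z * Zᵀ) * M + Mᵀ * (Z * Zᵀ) * A + F * Fᵀ = W * Wᵀ)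
    (hV : (A + α • M)ᵀ * V = W) :
    let W' := W - (2 * α) • (Mᵀ * V)
    let Z' := fromCols Z (Real.sqrt (-(2 * α)) • V)
    Aᵀ * (Z' * Z'ᵀ) * M + Mᵀ * (Z' * Z'ᵀ) * A + F * Fᵀ = W' * W'ᵀ :=
  stmt13_general A M F Z W V α hα hres hV
end

section
/- (Riccati residual factorization in NK-ADI) Let $X = Z Z^*$ satisfy the Lyapunov residual identity $A_k^* X M + M^* X A_k + F_k F_k^* = W W^*$, where $A_k = A - B K_{k-1}^*$, $F_k F_k^* = C^*C + K_{k-1} K_{k-1}^*$, and let $K = M^* X B$, $\Delta K = K - K_{k-1}$. Then the GCARE residual satisfies $\cR(ZZ^*) = A^*XM + M^*XA - M^*XBB^*XM + C^*C = W W^* - \Delta K \, \Delta K^*$, i.e., $\cR(ZZ^*) = [W, \Delta K] \,\mathrm{diag}(I, -I)\, [W, \Delta K]^*$. -/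
open Matrix

/-- Low-rank Riccati residual factorization in NK-ADI:
`𝓡(ZZᵀ) = W Wᵀ - ΔK ΔKᵀ`. -/
theorem stmt14 {n m p r : ℕ}
    (A M : Matrix (Fin n) (Fin n) ℝ) (B : Matrix (Fin n) (Fin m) ℝ)
    (C : Matrix (Fin p) (Fin n) ℝ) (Kp : Matrix (Fin n) (Fin m) ℝ)
    (Z : Matrix (Fin n) (Fin r) ℝ) (W : Matrix (Fin n) (Fin (p + m)) ℝ)
    (hlyap : (A - B * Kpᵀ)ᵀ * (Z * Zᵀ) * M + Mᵀ * (Z * Zᵀ) * (A - B * Kpᵀ)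
      + (Cᵀ * C + Kp * Kpᵀ) = W * Wᵀ) :
    Aᵀ * (Z * Zᵀ) * M + Mᵀ * (Z * Zᵀ) * A
      - Mᵀ * (Z * Zᵀ) * B * Bᵀ * (Z * Zᵀ) * M + Cᵀ * C
      = W * Wᵀ - (Mᵀ * (Z * Zᵀ) * B - Kp) * (Mᵀ * (Z * Zᵀ) * B - Kp)ᵀ := by
  rw [← hlyap]
  simp only [transpose_sub, transpose_mul, transpose_transpose,
    Matrix.sub_mul, Matrix.mul_sub, Matrix.mul_assoc]
  abel
end

section
/- (Low-rank residual factorization for ILRSI/RADI-type approximations) For any $Z \in \mathbb{C}^{n \times r}$ and invertible Hermitian $Y \in \mathbb{C}^{r \times r}$, the CARE residual of $X = Z Y^{-1} Z^*$ admits the factorization $\cR(X) = \hat W \hat D \hat W^*$ with $\hat W = [A^* Z,\, M^* Z,\, C^*]$ and $\hat D = \mathrm{diag}\left(\begin{bmatrix} 0 & Y^{-1} \\ Y^{-1} & -Y^{-1} Z^* B B^* Z Y^{-1} \end{bmatrix},\, I_p\right)$, where $\cR(X) = A^* X M + M^* X A - M^* X B B^* X M + C^*C$. -/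
open Matrix

namespace Matrix

variable {R : Type*} {l m n k₁ k₂ n₁ n₂ : Type*}

lemma fromCols_mul_fromBlocks_mul_fromRows [Semiring R] [Fintype k₁] [Fintype k₂]
    [Fintype n₁] [Fintype n₂]
    (P₁ : Matrix m k₁ R) (P₂ : Matrix m k₂ R)
    (D₁₁ : Matrix k₁ n₁ R) (D₁₂ : Matrix k₁ n₂ R) (D₂₁ : Matrix k₂ n₁ R) (D₂₂ : Matrix k₂ n₂ R)
    (Q₁ : Matrix n₁ l R) (Q₂ : Matrix n₂ l R) :
    fromCols P₁ P₂ * fromBlocks D₁₁ D₁₂ D₂₁ D₂₂ * fromRows Q₁ Q₂ =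
      P₁ * D₁₁ * Q₁ + P₂ * D₂₁ * Q₁ + (P₁ * D₁₂ * Q₂ + P₂ * D₂₂ * Q₂) := by
  rw [fromCols_mul_fromBlocks, fromCols_mul_fromRows, Matrix.add_mul, Matrix.add_mul]

variable [Fintype n]

def careResidual [Ring R] [StarRing R] {p q : Type*} [Fintype p] [Fintype q] (A M : Matrix n n R)
    (B : Matrix n q R) (C : Matrix p n R) (X : Matrix n n R) : Matrix n n R :=
  Aᴴ * X * M + Mᴴ * X * A - Mᴴ * X * B * Bᴴ * X * M + Cᴴ * C

-- `S` stands for the paper's `Y⁻¹`.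
theorem careResidual_eq_lowRank [Ring R] [StarRing R] {p q r : Type*} [Fintype p] [Fintype q]
    [Fintype r] [DecidableEq p] (A M : Matrix n n R) (B : Matrix n q R) (C : Matrix p n R)
    (Z : Matrix n r R) (S : Matrix r r R) :
    careResidual A M B C (Z * S * Zᴴ) =
      fromCols (fromCols (Aᴴ * Z) (Mᴴ * Z)) Cᴴ *
        fromBlocks (fromBlocks 0 S S (-(S * Zᴴ * B * Bᴴ * Z * S))) 0 0 (1 : Matrix p p R) *
        (fromCols (fromCols (Aᴴ * Z) (Mᴴ * Z)) Cᴴ)ᴴ := by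
  simp only [conjTranspose_fromCols_eq_fromRows_conjTranspose, conjTranspose_mul,
    conjTranspose_conjTranspose, fromCols_mul_fromBlocks_mul_fromRows, Matrix.mul_zero,
    Matrix.zero_mul, Matrix.mul_one, Matrix.mul_neg, Matrix.neg_mul, careResidual]
  simp only [Matrix.mul_assoc]
  abel

end Matrix

theorem stmt19_general {n m p r : ℕ}
    (A M : Matrix (Fin n) (Fin n) ℝ) (B : Matrix (Fin n) (Fin m) ℝ)
    (C : Matrix (Fin p) (Fin n) ℝ)
    (Z : Matrix (Fin n) (Fin r) ℂ) (Y : Matrix (Fin r) (Fin r) ℂ) :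
    let A' := A.map Complex.ofReal
    let M' := M.map Complex.ofReal
    let B' := B.map Complex.ofReal
    let C' := C.map Complex.ofReal
    let X := Z * Y⁻¹ * Zᴴ
    let Wh := fromCols (fromCols (A'ᴴ * Z) (M'ᴴ * Z)) C'ᴴ
    let Dh := fromBlocks
      (fromBlocks 0 Y⁻¹ Y⁻¹ (-(Y⁻¹ * Zᴴ * B' * B'ᴴ * Z * Y⁻¹))) 0 0
      (1 : Matrix (Fin p) (Fin p) ℂ)
    A'ᴴ * X * M' + M'ᴴ * X * A' - M'ᴴ * X * B' * B'ᴴ * X * M' + C'ᴴ * C'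
      = Wh * Dh * Whᴴ :=
  careResidual_eq_lowRank _ _ _ _ Z Y⁻¹

/-- Low-rank factorization of the GCARE residual of `X = Z Y⁻¹ Zᴴ`. -/
theorem stmt19 {n m p r : ℕ}
    (A M : Matrix (Fin n) (Fin n) ℝ) (B : Matrix (Fin n) (Fin m) ℝ)
    (C : Matrix (Fin p) (Fin n) ℝ)
    (Z : Matrix (Fin n) (Fin r) ℂ) (Y : Matrix (Fin r) (Fin r) ℂ)
    (hY : Y.IsHermitian) (hYu : IsUnit Y) :
    let A' := A.map Complex.ofReal
    let M' := M.map Complex.ofReal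
    let B' := B.map Complex.ofReal
    let C' := C.map Complex.ofReal
    let X := Z * Y⁻¹ * Zᴴ
    let Wh := fromCols (fromCols (A'ᴴ * Z) (M'ᴴ * Z)) C'ᴴ
    let Dh := fromBlocks
      (fromBlocks 0 Y⁻¹ Y⁻¹ (-(Y⁻¹ * Zᴴ * B' * B'ᴴ * Z * Y⁻¹))) 0 0
      (1 : Matrix (Fin p) (Fin p) ℂ)
    A'ᴴ * X * M' + M'ᴴ * X * A' - M'ᴴ * X * B' * B'ᴴ * X * M' + C'ᴴ * C'
      = Wh * Dh * Whᴴ :=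
  stmt19_general A M B C Z Y
end
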